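/- For every prime p >= 5, the local factor L_p = (p-1)(p^4-p^3+p^2-p+1)(46p^5+62p^4+79p^3+84p^2+84p+48)/(48(p^{10}-1)) satisfies L_p <= 23/24. -/
import Mathlib

/-- The ramified-quadratic local factor is at most 23/24. -/
theorem stmt_3 (p : ℕ) (hp : p.Prime) (hp5 : 5 ≤ p) :
    let x : ℝ := p
    (x - 1) * (x ^ 4 - x ^ 3 + x ^ 2 - x + 1) *
        (46 * x ^ 5 + 62 * x ^ 4 + 79 * x ^ 3 + 84 * x ^ 2 + 84 * x + 48) /
        (48 * (x ^ 10 - 1)) ≤ 23 / 24 := by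
  intro x
  have hx : (5:ℝ) ≤ x := by
    show (5:ℝ) ≤ (p:ℝ)
    exact_mod_cast hp5
  have hx0 : (0:ℝ) ≤ x := by linarith
  have hden : (0:ℝ) < 48 * (x ^ 10 - 1) := by
    nlinarith [pow_le_pow_left₀ (by norm_num : (0:ℝ) ≤ 5) hx 10]
  rw [div_le_div_iff₀ hden (by norm_num : (0:ℝ) < 24)]
  nlinarith [mul_nonneg (pow_nonneg hx0 8) (by linarith : (0:ℝ) ≤ x - 5),
    mul_nonneg (pow_nonneg hx0 6) (by linarith : (0:ℝ) ≤ x - 1),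
    mul_nonneg (pow_nonneg hx0 3) (by nlinarith : (0:ℝ) ≤ x ^ 2 - 1),
    mul_nonneg hx0 (by linarith : (0:ℝ) ≤ x - 1)]
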